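/- arXiv:1412.8336 — 4 statements merged into one kernel-verified Lean document; each statement's English description precedes it below -/
import Mathlib

section
/- Let G be a subgroup of GL₂(𝔽₂) such that every element g ∈ G has a non-zero fixed vector in 𝔽₂². Then there exists a non-zero vector v ∈ 𝔽₂² fixed by every element of G. -/
set_option synthInstance.maxHeartbeats 1000000 in
set_option synthInstance.maxSize 4000 in
set_option maxHeartbeats 4000000 in
private lemma key : ∀ g₁ g₂ : GL (Fin 2) (ZMod 2),
    (∃ v : Fin 2 → ZMod 2, v ≠ 0 ∧ (g₁ : Matrix (Fin 2) (Fin 2) (ZMod 2)).mulVec v = v) →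
    (∃ v : Fin 2 → ZMod 2, v ≠ 0 ∧ (g₂ : Matrix (Fin 2) (Fin 2) (ZMod 2)).mulVec v = v) →
    (∃ v : Fin 2 → ZMod 2, v ≠ 0 ∧ ((g₁ * g₂ : GL (Fin 2) (ZMod 2)) : Matrix (Fin 2) (Fin 2) (ZMod 2)).mulVec v = v) →
    ∀ v₁ v₂ : Fin 2 → ZMod 2, v₁ ≠ 0 → v₂ ≠ 0 →
      (g₁ : Matrix (Fin 2) (Fin 2) (ZMod 2)).mulVec v₁ = v₁ →
      (g₂ : Matrix (Fin 2) (Fin 2) (ZMod 2)).mulVec v₂ = v₂ →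
      g₁ ≠ 1 → g₂ ≠ 1 → v₁ = v₂ := by decide

/-- **Lemma (GL₂(𝔽₂) fixed vectors).**
If every element of a subgroup `G ⊆ GL₂(𝔽₂)` has a non-zero fixed vector in `𝔽₂²`,
then there is a non-zero vector fixed by all elements of `G`. -/
theorem stmt0 (G : Subgroup (GL (Fin 2) (ZMod 2)))
    (h : ∀ g ∈ G, ∃ v : Fin 2 → ZMod 2, v ≠ 0 ∧ (g : Matrix (Fin 2) (Fin 2) (ZMod 2)).mulVec v = v) :
    ∃ v : Fin 2 → ZMod 2, v ≠ 0 ∧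
      ∀ g ∈ G, (g : Matrix (Fin 2) (Fin 2) (ZMod 2)).mulVec v = v := by
  by_cases h1 : ∃ g ∈ G, g ≠ 1
  · obtain ⟨g₀, hg₀G, hg₀⟩ := h1
    obtain ⟨v₀, hv₀, hfix₀⟩ := h g₀ hg₀G
    refine ⟨v₀, hv₀, fun g hgG => ?_⟩
    by_cases hg : g = 1
    · subst hg
      simp [Matrix.mulVec_one]
    · obtain ⟨v, hv, hfix⟩ := h g hgG
      have := key g₀ g (h g₀ hg₀G) (h g hgG) (h (g₀ * g) (mul_mem hg₀G hgG))
        v₀ v hv₀ hv hfix₀ hfix hg₀ hg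
      rw [this]; exact hfix
  · push_neg at h1
    refine ⟨![1, 0], by decide, fun g hgG => ?_⟩
    rw [h1 g hgG]
    simp
end

section
/- Let m ≥ 1, F = 𝔽_{2^{2m}}, Q(x) := Tr_{𝔽_{2^m}/𝔽₂}(x^{1+2^m} viewed in 𝔽_{2^m}). Let s ∈ F^× generate the kernel of the norm map N_{F/𝔽_{2^m}}, and define σ(x) := s·x and τ(x) := x^{2^m}. Then: σ ≠ id; τ² = id; τ ∘ σ ∘ τ = σ^{-1}; for every i with σ^i ≠ id, σ^i has no non-zero fixed vector in F; and for every i, there exists x ∈ F with (τ ∘ σ^i)(x) = x and Q(x) = 1. -/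
open Finset Polynomial


lemma aux_trace (F : Type*) [Field F] [Fintype F] [CharP F 2] (m : ℕ) (hm : 1 ≤ m)
    (hcard : Fintype.card F = 2 ^ (2 * m)) :
    ∃ y : F, y ^ 2 ^ m = y ∧ ∑ j ∈ Finset.range m, y ^ 2 ^ j = 1 := by
  classical
  have hsq : ∀ y : F, y ^ 2 ^ m = y →
      (∑ j ∈ Finset.range m, y ^ 2 ^ j) * (∑ j ∈ Finset.range m, y ^ 2 ^ j - 1) = 0 := by
    intro y hy
    have h1 : (∑ j ∈ Finset.range m, y ^ 2 ^ j) ^ 2 = ∑ j ∈ Finset.range m, y ^ 2 ^ (j + 1) := by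
      rw [sum_pow_char]
      exact Finset.sum_congr rfl fun j _ => by rw [← pow_mul, pow_succ]
    have h2 : ∑ j ∈ Finset.range m, y ^ 2 ^ (j + 1) = ∑ j ∈ Finset.range m, y ^ 2 ^ j := by
      have := Finset.sum_range_succ' (fun j => y ^ 2 ^ j) m
      rw [Finset.sum_range_succ (fun j => y ^ 2 ^ j) m] at this
      have h0 : y ^ 2 ^ 0 = y := by norm_num
      rw [hy, h0] at this
      exact add_right_cancel this.symm
    linear_combination h1.trans h2
  have hmul : (2:ℕ) ^ m * 2 ^ m = 2 ^ (2 * m) := by rw [← pow_add, two_mul]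
  have hq2 : ∀ x : F, (x ^ 2 ^ m) ^ 2 ^ m = x := by
    intro x
    rw [← pow_mul, hmul, ← hcard]
    exact FiniteField.pow_card x
  have h2f : Fact (Nat.Prime 2) := ⟨Nat.prime_two⟩
  set f : F →+ F := AddMonoidHom.mk' (fun x => x ^ 2 ^ m - x)
    (fun a b => by simp only [add_pow_char_pow]; ring) with hf
  have hker : ∀ x : F, x ∈ f.ker ↔ x ^ 2 ^ m = x := by
    intro x
    rw [AddMonoidHom.mem_ker]
    simp only [hf, AddMonoidHom.mk'_apply, sub_eq_zero]
  have hrange_le : f.range ≤ f.ker := by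
    rintro _ ⟨x, rfl⟩
    rw [hker]
    simp only [hf, AddMonoidHom.mk'_apply, sub_pow_char_pow, hq2]
    rw [CharTwo.sub_eq_add, CharTwo.sub_eq_add, add_comm]
  have hcardker : 2 ^ m ≤ Nat.card f.ker := by
    have h1 : Nat.card F = Nat.card (F ⧸ f.ker) * Nat.card f.ker :=
      AddSubgroup.card_eq_card_quotient_mul_card_addSubgroup _
    have h2 : Nat.card (F ⧸ f.ker) = Nat.card f.range :=
      Nat.card_congr (QuotientAddGroup.quotientKerEquivRange f).toEquiv
    have h3 : Nat.card f.range ≤ Nat.card f.ker := AddSubgroup.card_le_of_le hrange_le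
    have h4 : (2:ℕ) ^ (2 * m) ≤ Nat.card f.ker * Nat.card f.ker := by
      calc (2:ℕ) ^ (2 * m) = Nat.card F := by rw [Nat.card_eq_fintype_card, hcard]
        _ = Nat.card (F ⧸ f.ker) * Nat.card f.ker := h1
        _ ≤ Nat.card f.ker * Nat.card f.ker := by
            exact Nat.mul_le_mul_right _ (h2 ▸ h3)
    by_contra hlt
    push_neg at hlt
    have := Nat.mul_lt_mul'' hlt hlt
    omega
  -- the trace polynomial
  by_contra hcon
  push_neg at hcon
  set P : Polynomial F := ∑ j ∈ Finset.range m, X ^ 2 ^ j with hP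
  have hPne : P ≠ 0 := by
    intro h0
    have : P.coeff 1 = 1 := by
      rw [hP, Polynomial.finset_sum_coeff]
      rw [Finset.sum_eq_single 0]
      · simp
      · intro j hj hj0
        rw [Polynomial.coeff_X_pow, if_neg]
        exact fun h => hj0 (by
          have : (1:ℕ) < 2 ^ j := Nat.one_lt_two_pow_iff.mpr hj0
          omega)
      · intro h; exact absurd (Finset.mem_range.mpr hm) h
    rw [h0] at this
    simp at this
  have hPdeg : P.natDegree ≤ 2 ^ (m - 1) := by
    apply Polynomial.natDegree_sum_le_of_forall_le
    intro j hj
    rw [Polynomial.natDegree_X_pow]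
    have := Finset.mem_range.mp hj
    exact Nat.pow_le_pow_right (by norm_num) (by omega : j ≤ m - 1)
  -- all elements of ker are roots of P
  have hroots : ∀ x : F, x ∈ f.ker → x ∈ P.roots.toFinset := by
    intro x hx
    rw [Multiset.mem_toFinset, Polynomial.mem_roots hPne]
    have hxK := (hker x).mp hx
    have hval : P.eval x = ∑ j ∈ Finset.range m, x ^ 2 ^ j := by
      rw [hP, Polynomial.eval_finset_sum]
      simp
    rcases mul_eq_zero.mp (hsq x hxK) with h | h
    · rw [Polynomial.IsRoot, hval]; exact h
    · exact absurd (by linear_combination h : ∑ j ∈ Finset.range m, x ^ 2 ^ j = 1)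
        (hcon x hxK)
  -- cardinality contradiction
  have hinj : Nat.card f.ker ≤ P.roots.toFinset.card := by
    classical
    have : ((f.ker : Set F)).toFinset ⊆ P.roots.toFinset := by
      intro x hx
      exact hroots x (by simpa using hx)
    have hcc : ((f.ker : Set F)).toFinset.card = Nat.card f.ker := by
      rw [Set.toFinset_card, Nat.card_eq_fintype_card]
      exact Fintype.card_congr (Equiv.refl _)
    calc Nat.card f.ker = ((f.ker : Set F)).toFinset.card := hcc.symm
      _ ≤ P.roots.toFinset.card := Finset.card_le_card this
  have : P.roots.toFinset.card ≤ 2 ^ (m - 1) :=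
    le_trans (le_trans (Multiset.toFinset_card_le _) (Polynomial.card_roots' P)) hPdeg
  have hlt : (2:ℕ) ^ (m - 1) < 2 ^ m := Nat.pow_lt_pow_right (by norm_num) (by omega)
  omega



/-- **The elements σ, τ of O(Q) (Lemma on dihedral symmetries).**
Let `F = 𝔽_{2^{2m}}`, `Q x = Tr_{𝔽_{2^m}/𝔽₂}(x^(1+2^m))` (computed inside `F` as
`∑_{i<m} (x^(2^m+1))^(2^i)`, a value in the prime field).  Let `s ∈ F^×` generate
the kernel of the norm map `N_{F/𝔽_{2^m}}(x) = x^(2^m+1)`, and set `σ(x) := s·x`,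
`τ(x) := x^(2^m)`.  Then: `σ ≠ id`; `τ ∘ τ = id`; `τ ∘ σ ∘ τ = σ⁻¹` (multiplication
by `s⁻¹`); if `σ^i ≠ id` (i.e. `s^i ≠ 1`) then `σ^i` has no non-zero fixed vector;
and for every `i` there is `x` with `(τ ∘ σ^i)(x) = x` and `Q x = 1`. -/
theorem stmt9 (m : ℕ) (hm : 1 ≤ m) :
    let F := GaloisField 2 (2 * m)
    let Q : F → F := fun x => ∑ i ∈ Finset.range m, (x ^ (2 ^ m + 1)) ^ (2 ^ i)
    ∀ s : Fˣ, (s ^ (2 ^ m + 1) = 1) →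
      (∀ x : Fˣ, x ^ (2 ^ m + 1) = 1 → x ∈ Subgroup.zpowers s) →
      ((fun x : F => (s : F) * x) ≠ id) ∧
      ((fun x : F => x ^ (2 ^ m)) ∘ (fun x : F => x ^ (2 ^ m)) = id) ∧
      ((fun x : F => x ^ (2 ^ m)) ∘ (fun x : F => (s : F) * x) ∘
          (fun x : F => x ^ (2 ^ m)) = fun x : F => ((s : F))⁻¹ * x) ∧
      (∀ i : ℕ, (s : F) ^ i ≠ 1 → ∀ x : F, (s : F) ^ i * x = x → x = 0) ∧
      (∀ i : ℕ, ∃ x : F, ((s : F) ^ i * x) ^ (2 ^ m) = x ∧ Q x = 1) := by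
  intro F Q s hs hgen
  classical
  letI : Fintype F := Fintype.ofFinite F
  have h2m : 2 * m ≠ 0 := by omega
  have hcard : Fintype.card F = 2 ^ (2 * m) := by
    rw [← Nat.card_eq_fintype_card]; exact GaloisField.card 2 (2 * m) h2m
  have hmul : (2:ℕ) ^ m * 2 ^ m = 2 ^ (2 * m) := by rw [← pow_add, two_mul]
  have hq2 : ∀ x : F, (x ^ 2 ^ m) ^ 2 ^ m = x := by
    intro x
    rw [← pow_mul, hmul, ← hcard]
    exact FiniteField.pow_card x
  have hq1 : (2:ℕ) ≤ 2 ^ m := by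
    calc (2:ℕ) = 2 ^ 1 := (pow_one 2).symm
      _ ≤ 2 ^ m := Nat.pow_le_pow_right (by norm_num) hm
  -- generator of the unit group
  obtain ⟨g, hg⟩ := IsCyclic.exists_generator (α := Fˣ)
  have hgord : orderOf g = 2 ^ (2 * m) - 1 := by
    rw [orderOf_eq_card_of_forall_mem_zpowers hg, Nat.card_units, GaloisField.card 2 (2 * m) h2m]
  set t : Fˣ := g ^ (2 ^ m - 1) with ht
  have hfact : (2 ^ m - 1) * (2 ^ m + 1) = 2 ^ (2 * m) - 1 := by
    obtain ⟨c, hc⟩ : ∃ c, 2 ^ m = c + 2 := ⟨2 ^ m - 2, by omega⟩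
    rw [← hmul, hc]
    have h1 : (c + 2) * (c + 2) = c * c + 4 * c + 4 := by ring
    have h2 : (c + 2 - 1) * (c + 2 + 1) = c * c + 4 * c + 3 := by
      have h3 : c + 2 - 1 = c + 1 := rfl
      rw [h3]; ring
    omega
  have htord : orderOf t = 2 ^ m + 1 := by
    rw [ht, orderOf_pow, hgord, Nat.gcd_eq_right ⟨2 ^ m + 1, hfact.symm⟩,
      ← hfact, Nat.mul_div_cancel_left _ (by omega)]
  have ht1 : t ^ (2 ^ m + 1) = 1 := by
    rw [ht, ← pow_mul, hfact, ← hgord]; exact pow_orderOf_eq_one g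
  have htmem : t ∈ Subgroup.zpowers s := hgen t ht1
  have hsord : orderOf s = 2 ^ m + 1 := by
    refine Nat.dvd_antisymm (orderOf_dvd_of_pow_eq_one hs) ?_
    exact htord ▸ orderOf_dvd_of_mem_zpowers htmem
  have hsne1 : s ≠ 1 := by
    intro h
    rw [h, orderOf_one] at hsord
    omega
  refine ⟨?_, ?_, ?_, ?_, ?_⟩
  · -- σ ≠ id
    intro h
    have := congrFun h 1
    simp only [mul_one, id_eq] at this
    exact hsne1 (Units.val_eq_one.mp this)
  · -- τ ∘ τ = id
    funext x
    simp only [Function.comp_apply, id_eq]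
    exact hq2 x
  · -- τ σ τ = σ⁻¹
    have hsinv : (s : F) ^ 2 ^ m = ((s : F))⁻¹ := by
      have h1 := congrArg Units.val hs
      push_cast at h1
      rw [pow_succ] at h1
      exact eq_inv_of_mul_eq_one_left h1
    funext x
    simp only [Function.comp_apply]
    rw [mul_pow, hq2, hsinv]
  · -- no fixed vectors
    intro i hi x hx
    have h0 : ((s : F) ^ i - 1) * x = 0 := by rw [sub_mul, one_mul, hx, sub_self]
    rcases mul_eq_zero.mp h0 with h | h
    · exact absurd (by linear_combination h) hi
    · exact h
  · -- existence of fixed vector of τσ^i with Q = 1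
    intro i
    -- zpowers s = zpowers t, so s is a power of t, hence of g^(2^m-1)
    have hzeq : Subgroup.zpowers t = Subgroup.zpowers s := by
      apply Subgroup.eq_of_le_of_card_ge (Subgroup.zpowers_le.mpr htmem)
      rw [Nat.card_zpowers, Nat.card_zpowers, htord, hsord]
    obtain ⟨k, hk⟩ := Subgroup.mem_zpowers_iff.mp (hzeq ▸ Subgroup.mem_zpowers s)
    set u : Fˣ := g ^ (k * (i : ℤ)) with hu
    have hupow : u ^ (2 ^ m - 1) = s ^ i := by
      have h1 : u ^ (2 ^ m - 1) = g ^ (k * (i : ℤ) * ((2 ^ m - 1 : ℕ) : ℤ)) := by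
        rw [hu, ← zpow_natCast (g ^ (k * (i:ℤ))), ← zpow_mul]
      have h2 : s ^ i = g ^ (((2 ^ m - 1 : ℕ) : ℤ) * k * (i : ℤ)) := by
        rw [← hk, ht, ← zpow_natCast g, ← zpow_mul, ← zpow_natCast (g ^ (((2^m-1:ℕ):ℤ) * k)), ← zpow_mul]
      rw [h1, h2, show k * (i:ℤ) * ((2 ^ m - 1 : ℕ) : ℤ) = ((2 ^ m - 1 : ℕ) : ℤ) * k * (i:ℤ) by ring]
    have hu0 : (u : F) ≠ 0 := Units.ne_zero u
    have hupow' : (u : F) ^ (2 ^ m - 1) = (s : F) ^ i := by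
      have h1 := congrArg Units.val hupow
      push_cast at h1
      exact h1
    have huq : (u : F) ^ 2 ^ m = (s : F) ^ i * u := by
      have : (2:ℕ) ^ m = (2 ^ m - 1) + 1 := by omega
      rw [this, pow_succ, hupow']
    set a : F := (s : F) ^ i * (u : F) ^ 2 with ha
    have haq : a = (u:F) ^ 2 ^ m * u := by rw [huq, ha]; ring
    have haK : a ^ 2 ^ m = a := by
      rw [haq, mul_pow, hq2]
      ring
    have ha0 : a ≠ 0 := by
      rw [haq]
      exact mul_ne_zero (pow_ne_zero _ hu0) hu0
    obtain ⟨y, hyK, hyT⟩ := aux_trace F m hm hcard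
    set z : F := y * a⁻¹ with hz
    have hzK : z ^ 2 ^ m = z := by
      rw [hz, mul_pow, hyK, inv_pow, haK]
    set c : F := z ^ 2 ^ (m - 1) with hc
    have hc2 : c ^ 2 = z := by
      rw [hc, ← pow_mul, ← pow_succ, show m - 1 + 1 = m by omega, hzK]
    have hcK : c ^ 2 ^ m = c := by
      rw [hc, pow_right_comm, hzK]
    have hs1 : ((s : F) ^ i) ^ 2 ^ m * (s : F) ^ i = 1 := by
      have h1 := congrArg Units.val hs
      push_cast at h1
      rw [← pow_succ, pow_right_comm, h1, one_pow]
    refine ⟨c * u, ?_, ?_⟩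
    · rw [mul_pow, mul_pow, hcK, huq]
      calc ((s:F)^i) ^ 2 ^ m * (c * ((s:F)^i * u)) = (((s:F)^i) ^ 2 ^ m * (s:F)^i) * (c * u) := by ring
        _ = c * u := by rw [hs1, one_mul]
    · show ∑ j ∈ Finset.range m, (((c * u : F)) ^ (2 ^ m + 1)) ^ 2 ^ j = 1
      have hx1 : ((c * u : F)) ^ (2 ^ m + 1) = y := by
        rw [mul_pow, pow_succ, pow_succ, hcK, huq]
        have : c * c = z := by rw [← hc2]; ring
        calc c * c * ((s:F)^i * u * u) = (c * c) * a := by rw [ha]; ring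
          _ = z * a := by rw [this]
          _ = y := by rw [hz, inv_mul_cancel_right₀ ha0]
      rw [hx1]
      exact hyT
end

section
/- Let V = V₁ ⊕ V₂ ⊕ V₃ where V₁ = 𝔽₂^{2m-4} (m ≥ 3) carries a quadratic form Q₁ of Arf invariant 1 whose polar form is the standard symplectic form, and V₂ = V₃ = 𝔽₂² each carry the form Qᵢ(a eᵢ + b fᵢ) = a² + ab + b². Let σ, τ ∈ O(Q₁) satisfy: σ ≠ id; τ² = id; τστ = σ^{-1}; σ^i has no nonzero fixed vector whenever σ^i ≠ id; and each τσ^i fixes some vector x with Q₁(x) = 1. Let η swap V₂ and V₃ via η(e₂)=e₃, η(f₂)=f₃, η(e₃)=e₂, η(f₃)=f₂, and let G ⊂ O(Q₁ ⊕ Q₂ ⊕ Q₃) be generated by (σ, id) and (τ, η). Then: (1) no vector v ∈ V with Q(v) = 1 is fixed by all elements of G; (2) every element g ∈ G fixes some vector v ∈ V with Q(v) = 1. -/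
/-! The generators `A = (σ, 1)` and `B = (τ, η)` satisfy the dihedral relations `B² = 1`,
`BAB = A⁻¹`, so every element of `G` is `(σ^k, 1)` or `(τσ^k, η)`. A vector fixed by `A` has
zero `V₁`-component, since `σ` has no nonzero fixed vector, and a vector fixed by `B` has equal
`V₂`- and `V₃`-components; so `Q` vanishes on a common fixed vector. Conversely `(σ^k, 1)` fixes
`(0, e₂, 0)`, and `(τσ^k, η)` fixes `(x, 0, 0)` for an `x` with `τσ^k x = x`, `Q₁ x = 1`, which
exists because `σ` has finite order, so `σ^k` is a power `σ^i` with `i ≥ 0`. -/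

open Subgroup

theorem mul_zpow_mul_eq_zpow_neg {G : Type*} [Group G] {a b : G} (hb : b * b = 1)
    (hba : b * a * b = a⁻¹) (k : ℤ) : b * a ^ k * b = a ^ (-k) := by
  have hb' : b⁻¹ = b := inv_eq_of_mul_eq_one_right hb
  calc b * a ^ k * b = (b * a * b⁻¹) ^ k := by rw [conj_zpow, hb']
    _ = a ^ (-k) := by rw [hb', hba, inv_zpow, zpow_neg]

theorem exists_zpow_or_mul_zpow_of_mem_closure_pair {G : Type*} [Group G] {a b : G}
    (hb : b * b = 1) (hba : b * a * b = a⁻¹) {g : G} (hg : g ∈ closure {a, b}) :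
    ∃ k : ℤ, g = a ^ k ∨ g = b * a ^ k := by
  have hconj := mul_zpow_mul_eq_zpow_neg hb hba
  induction hg using closure_induction with
  | mem x hx =>
    rcases hx with rfl | rfl
    · exact ⟨1, .inl (zpow_one x).symm⟩
    · exact ⟨0, .inr (by rw [zpow_zero, mul_one])⟩
  | one => exact ⟨0, .inl (zpow_zero a).symm⟩
  | mul x y _ _ hx hy =>
    obtain ⟨i, rfl | rfl⟩ := hx <;> obtain ⟨j, rfl | rfl⟩ := hy
    · exact ⟨i + j, .inl (zpow_add a i j).symm⟩
    · refine ⟨-i + j, .inr ?_⟩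
      calc a ^ i * (b * a ^ j) = b * b * a ^ i * (b * a ^ j) := by rw [hb, one_mul]
        _ = b * (b * a ^ i * b) * a ^ j := by simp only [mul_assoc]
        _ = b * a ^ (-i + j) := by rw [hconj, mul_assoc, zpow_add]
    · exact ⟨i + j, .inr (by rw [zpow_add, mul_assoc])⟩
    · refine ⟨-i + j, .inl ?_⟩
      rw [← mul_assoc, hconj, zpow_add]
  | inv x _ hx =>
    obtain ⟨i, rfl | rfl⟩ := hx
    · exact ⟨-i, .inl (zpow_neg a i).symm⟩
    · refine ⟨i, .inr (inv_eq_of_mul_eq_one_right ?_)⟩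
      rw [← mul_assoc, hconj, ← zpow_add, neg_add_cancel, zpow_zero]

theorem LinearEquiv.exists_pow_eq_zpow {R M : Type*} [Ring R] [Finite R] [AddCommGroup M]
    [Module R M] [Module.Finite R M] (f : M ≃ₗ[R] M) (k : ℤ) : ∃ i : ℕ, f ^ i = f ^ k := by
  have : Finite M := Module.finite_of_finite R
  have : Finite (M ≃ₗ[R] M) := Finite.of_injective _ DFunLike.coe_injective
  exact mem_powers_iff_mem_zpowers.mpr (zpow_mem_zpowers f k)

def LinearEquiv.prodCongrHom (R M N : Type*) [Semiring R] [AddCommMonoid M] [AddCommMonoid N]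
    [Module R M] [Module R N] : (M ≃ₗ[R] M) × (N ≃ₗ[R] N) →* ((M × N) ≃ₗ[R] (M × N)) where
  toFun p := p.1.prodCongr p.2
  map_one' := rfl
  map_mul' _ _ := rfl

@[simp]
theorem LinearEquiv.prodCongrHom_apply {R M N : Type*} [Semiring R] [AddCommMonoid M]
    [AddCommMonoid N] [Module R M] [Module R N] (p : (M ≃ₗ[R] M) × (N ≃ₗ[R] N)) (v : M × N) :
    prodCongrHom R M N p v = (p.1 v.1, p.2 v.2) :=
  rfl

theorem map_zero_of_polarization {V : Type*} [AddCommGroup V] [Module (ZMod 2) V]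
    {b : LinearMap.BilinForm (ZMod 2) V} {Q : V → ZMod 2}
    (hQ : ∀ x y, Q (x + y) + Q x + Q y = b x y) : Q 0 = 0 := by
  simpa [CharTwo.add_self_eq_zero] using hQ 0 0

theorem stmt13_general
    (V₁ : Type*) [AddCommGroup V₁] [Module (ZMod 2) V₁] [FiniteDimensional (ZMod 2) V₁]
    (b₁ : LinearMap.BilinForm (ZMod 2) V₁)
    (Q₁ : V₁ → ZMod 2) (hQ₁ : ∀ x y : V₁, Q₁ (x + y) + Q₁ x + Q₁ y = b₁ x y)
    (σ τ : V₁ ≃ₗ[ZMod 2] V₁)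
    (hσne : σ ≠ 1) (hτ2 : τ * τ = 1) (hτστ : τ * σ * τ = σ⁻¹)
    (hσfix : ∀ i : ℕ, σ ^ i ≠ 1 → ∀ x : V₁, (σ ^ i) x = x → x = 0)
    (hτσfix : ∀ i : ℕ, ∃ x : V₁, (τ * σ ^ i) x = x ∧ Q₁ x = 1) :
    let W := ZMod 2 × ZMod 2
    let q : W → ZMod 2 := fun p => p.1 ^ 2 + p.1 * p.2 + p.2 ^ 2
    let V := V₁ × (W × W)
    let Q : V → ZMod 2 := fun v => Q₁ v.1 + q v.2.1 + q v.2.2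
    let η : (W × W) ≃ₗ[ZMod 2] (W × W) := LinearEquiv.prodComm (ZMod 2) W W
    let A : V ≃ₗ[ZMod 2] V := σ.prodCongr (LinearEquiv.refl (ZMod 2) (W × W))
    let B : V ≃ₗ[ZMod 2] V := τ.prodCongr η
    let G : Subgroup (V ≃ₗ[ZMod 2] V) := Subgroup.closure {A, B}
    (¬ ∃ v : V, Q v = 1 ∧ ∀ g ∈ G, g v = v) ∧
    (∀ g ∈ G, ∃ v : V, Q v = 1 ∧ g v = v) := by
  intro W q V Q η A B G
  let φ := LinearEquiv.prodCongrHom (ZMod 2) V₁ (W × W)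
  have hA : A = φ (σ, 1) := rfl
  have hB : B = φ (τ, η) := rfl
  have hη : η * η = 1 := rfl
  have hBB : B * B = 1 := by
    rw [hB, ← map_mul, Prod.mk_mul_mk, hτ2, hη, Prod.mk_one_one, map_one]
  have hBAB : B * A * B = A⁻¹ := by
    rw [hA, hB, ← map_mul, ← map_mul, ← map_inv]
    simp [hτστ, hη]
  have hQ₁0 := map_zero_of_polarization hQ₁
  constructor
  · rintro ⟨v, hQv, hfix⟩
    have hv₁ : v.1 = 0 :=
      hσfix 1 (by rwa [pow_one]) _ (congrArg Prod.fst (hfix A (subset_closure (by simp))))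
    have hv₂ : v.2.2 = v.2.1 := congrArg (·.2.1) (hfix B (subset_closure (by simp)))
    simp [Q, hv₁, hv₂, hQ₁0, CharTwo.add_self_eq_zero] at hQv
  · intro g hg
    obtain ⟨k, rfl | rfl⟩ := exists_zpow_or_mul_zpow_of_mem_closure_pair hBB hBAB hg
    · refine ⟨(0, (1, 0), 0), by simp [Q, q, hQ₁0], ?_⟩
      rw [hA, ← map_zpow, LinearEquiv.prodCongrHom_apply]
      simp
    · obtain ⟨i, hi⟩ := σ.exists_pow_eq_zpow k
      obtain ⟨x, hx, hQx⟩ := hτσfix i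
      refine ⟨(x, 0), by simp [Q, q, hQx], ?_⟩
      rw [hA, hB, ← map_zpow, ← map_mul, LinearEquiv.prodCongrHom_apply]
      simp [← hi, hx]

/-- **The key construction: the group G = ⟨(σ, id), (τ, η)⟩ in O(Q₁ ⊕ Q₂ ⊕ Q₃).**
Let `V₁` be a `(2m-4)`-dimensional `𝔽₂`-space (`m ≥ 3`) with a quadratic form `Q₁`
of Arf invariant `1` (encoded by its count `#{Q₁ = 1} = 2^(m-3)(2^(m-2)+1)`) whose
polar form `b₁` is nondegenerate and alternating.  Let `V₂ = V₃ = 𝔽₂²` carry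
`q(a,b) = a² + ab + b²`, and `Q = Q₁ ⊕ q ⊕ q` on `V = V₁ × (V₂ × V₃)`.
Let `σ, τ ∈ O(Q₁)` satisfy: `σ ≠ 1`; `τ² = 1`; `τστ = σ⁻¹`; `σ^i` has no nonzero
fixed vector whenever `σ^i ≠ 1`; each `τσ^i` fixes some `x` with `Q₁ x = 1`.
Let `η` swap the two factors `V₂, V₃`, and let `G` be generated by `(σ, id)` and
`(τ, η)`.  Then (1) no `v ∈ V` with `Q v = 1` is fixed by all of `G`, and
(2) every `g ∈ G` fixes some `v ∈ V` with `Q v = 1`. -/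
theorem stmt13 (m : ℕ) (hm : 3 ≤ m)
    (V₁ : Type*) [AddCommGroup V₁] [Module (ZMod 2) V₁] [FiniteDimensional (ZMod 2) V₁]
    (hd₁ : Module.finrank (ZMod 2) V₁ = 2 * m - 4)
    (b₁ : LinearMap.BilinForm (ZMod 2) V₁) (hb₁nd : b₁.Nondegenerate)
    (hb₁alt : ∀ x : V₁, b₁ x x = 0)
    (Q₁ : V₁ → ZMod 2) (hQ₁ : ∀ x y : V₁, Q₁ (x + y) + Q₁ x + Q₁ y = b₁ x y)
    (hArf₁ : Nat.card {x : V₁ // Q₁ x = 1} = 2 ^ (m - 3) * (2 ^ (m - 2) + 1))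
    (σ τ : V₁ ≃ₗ[ZMod 2] V₁)
    (hσQ : ∀ x : V₁, Q₁ (σ x) = Q₁ x) (hτQ : ∀ x : V₁, Q₁ (τ x) = Q₁ x)
    (hσne : σ ≠ 1) (hτ2 : τ * τ = 1) (hτστ : τ * σ * τ = σ⁻¹)
    (hσfix : ∀ i : ℕ, σ ^ i ≠ 1 → ∀ x : V₁, (σ ^ i) x = x → x = 0)
    (hτσfix : ∀ i : ℕ, ∃ x : V₁, (τ * σ ^ i) x = x ∧ Q₁ x = 1) :
    let W := ZMod 2 × ZMod 2
    let q : W → ZMod 2 := fun p => p.1 ^ 2 + p.1 * p.2 + p.2 ^ 2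
    let V := V₁ × (W × W)
    let Q : V → ZMod 2 := fun v => Q₁ v.1 + q v.2.1 + q v.2.2
    let η : (W × W) ≃ₗ[ZMod 2] (W × W) := LinearEquiv.prodComm (ZMod 2) W W
    let A : V ≃ₗ[ZMod 2] V := σ.prodCongr (LinearEquiv.refl (ZMod 2) (W × W))
    let B : V ≃ₗ[ZMod 2] V := τ.prodCongr η
    let G : Subgroup (V ≃ₗ[ZMod 2] V) := Subgroup.closure {A, B}
    (¬ ∃ v : V, Q v = 1 ∧ ∀ g ∈ G, g v = v) ∧
    (∀ g ∈ G, ∃ v : V, Q v = 1 ∧ g v = v) :=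
  stmt13_general V₁ b₁ Q₁ hQ₁ σ τ hσne hτ2 hτστ hσfix hτσfix
end

section
/- For every m ≥ 3 there exists a subgroup G of Sp_{2m}(𝔽₂) such that: (a) there is no quadratic form of Arf invariant 0 with polar form the standard symplectic form that is fixed by every element of G; and (b) for every g ∈ G there exists a quadratic form of Arf invariant 0 with the standard polar form fixed by g. -/
/-!
Take `G` to be the group of shears `(a, b) ↦ (a, b + S a)` with `S` symmetric, which fix the
Lagrangian `b = 0` pointwise. If a quadratic form `Q` with the standard polar form is fixed by all
of `G`, then `q v := Q (0, v)` is additive (the polar form vanishes on the Lagrangian `a = 0`),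
while the shear by `S = v vᵀ` forces `q v = 1` for every `v ≠ 0`; this is impossible as soon as
there are two independent vectors. On the other hand the single shear by `S` fixes
`Q_s (a, b) = (a + s) ⬝ b` as soon as `S s = diag S`, and over `𝔽₂` the diagonal of a symmetric
matrix always lies in its column space, because `v ↦ vᵀ S v = diag S ⬝ v` vanishes on `ker S`.
Every `Q_s` has Arf invariant `0`, being a translate of `a ⬝ b`.
-/

open Matrix

namespace SymplecticF2

variable {ι R : Type*} [Fintype ι]

section Shear

variable [CommRing R]

def shear (S : Matrix ι ι R) : ((ι → R) × (ι → R)) ≃ₗ[R] (ι → R) × (ι → R) :=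
  (LinearEquiv.refl R _).skewProd (LinearEquiv.refl R _) S.mulVecLin

@[simp]
lemma shear_apply (S : Matrix ι ι R) (x : (ι → R) × (ι → R)) :
    shear S x = (x.1, x.2 + S *ᵥ x.1) := rfl

lemma shear_zero : shear (0 : Matrix ι ι R) = 1 := by
  ext x <;> simp

lemma shear_add (S T : Matrix ι ι R) : shear (S + T) = shear S * shear T := by
  ext x <;> simp [add_mulVec, add_assoc, add_comm (S *ᵥ x.1)]

def symmetricShears (ι R : Type*) [Fintype ι] [CommRing R] :
    Subgroup (((ι → R) × (ι → R)) ≃ₗ[R] (ι → R) × (ι → R)) where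
  carrier := {g | ∃ S : Matrix ι ι R, S.IsSymm ∧ shear S = g}
  one_mem' := ⟨0, isSymm_zero, shear_zero⟩
  mul_mem' := by
    rintro _ _ ⟨S, hS, rfl⟩ ⟨T, hT, rfl⟩
    exact ⟨S + T, hS.add hT, shear_add S T⟩
  inv_mem' := by
    rintro _ ⟨S, hS, rfl⟩
    refine ⟨-S, hS.neg, eq_inv_of_mul_eq_one_left ?_⟩
    rw [← shear_add, neg_add_cancel, shear_zero]

end Shear

lemma shear_preserves_form [CommRing R] [CharP R 2] {S : Matrix ι ι R} (hS : S.IsSymm)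
    (x y : (ι → R) × (ι → R)) :
    (shear S x).1 ⬝ᵥ (shear S y).2 + (shear S x).2 ⬝ᵥ (shear S y).1 =
      x.1 ⬝ᵥ y.2 + x.2 ⬝ᵥ y.1 := by
  have hsymm : x.1 ⬝ᵥ S *ᵥ y.1 = S *ᵥ x.1 ⬝ᵥ y.1 := by
    rw [dotProduct_mulVec, ← mulVec_transpose, hS.eq]
  simp only [shear_apply, dotProduct_add, add_dotProduct, hsymm]
  linear_combination (S *ᵥ x.1 ⬝ᵥ y.1) * CharP.cast_eq_zero R 2

lemma dotProduct_mulVec_self_of_isSymm {S : Matrix ι ι (ZMod 2)} (hS : S.IsSymm)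
    (v : ι → ZMod 2) : v ⬝ᵥ S *ᵥ v = diag S ⬝ᵥ v := by
  classical
  set f : ι × ι → ZMod 2 := fun p => v p.1 * S p.1 p.2 * v p.2
  have hoff : ∑ p ∈ Finset.univ.offDiag, f p = 0 := by
    refine Finset.sum_involution (fun p _ => p.swap) (fun p _ => ?_) (fun p hp _ => ?_)
      (fun p hp => by simpa [and_comm, eq_comm] using hp) (fun p _ => p.swap_swap)
    · simp only [f, Prod.fst_swap, Prod.snd_swap, hS.apply]
      linear_combination (v p.1 * S p.1 p.2 * v p.2) * (by decide : (2 : ZMod 2) = 0)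
    · simp only [Finset.mem_offDiag] at hp
      exact fun h => hp.2.2 (congrArg Prod.snd h)
  calc v ⬝ᵥ S *ᵥ v = ∑ p ∈ Finset.univ ×ˢ Finset.univ, f p := by
        simp only [Finset.univ_product_univ, Fintype.sum_prod_type, f, dotProduct, mulVec,
          Finset.mul_sum, mul_assoc]
    _ = ∑ i, S i i * v i := by
        rw [← Finset.diag_union_offDiag, Finset.sum_union (Finset.disjoint_diag_offDiag _),
          hoff, add_zero, Finset.sum_diag]
        refine Finset.sum_congr rfl fun i _ => ?_
        have : v i * v i = v i := by generalize v i = a; revert a; decide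
        simp only [f]
        linear_combination S i i * this

lemma exists_mulVec_eq_of_orthogonal_ker_transpose {m n K : Type*} [Fintype m] [Fintype n]
    [DecidableEq m] [DecidableEq n] [Field K] (A : Matrix m n K) (d : m → K)
    (hd : ∀ v, Aᵀ *ᵥ v = 0 → d ⬝ᵥ v = 0) : ∃ s, A *ᵥ s = d := by
  have hmem : dotProductEquiv K m d ∈ (LinearMap.ker Aᵀ.mulVecLin).dualAnnihilator :=
    (Submodule.mem_dualAnnihilator _).2 fun v hv => hd v hv
  rw [← LinearMap.range_dualMap_eq_dualAnnihilator_ker] at hmem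
  obtain ⟨ψ, hψ⟩ := hmem
  obtain ⟨s, rfl⟩ := (dotProductEquiv K n).surjective ψ
  refine ⟨s, dotProduct_eq _ _ fun v => ?_⟩
  have := LinearMap.congr_fun hψ v
  simp only [LinearMap.dualMap_apply, Matrix.mulVecLin_apply, dotProductEquiv_apply_apply] at this
  rwa [dotProduct_mulVec, vecMul_transpose] at this

lemma exists_mulVec_eq_diag {S : Matrix ι ι (ZMod 2)} (hS : S.IsSymm) :
    ∃ s, S *ᵥ s = diag S := by
  classical
  refine exists_mulVec_eq_of_orthogonal_ker_transpose S _ fun v hv => ?_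
  rw [hS.eq] at hv
  rw [← dotProduct_mulVec_self_of_isSymm hS, hv, dotProduct_zero]

def shiftedForm [CommRing R] (s : ι → R) (x : (ι → R) × (ι → R)) : R := (x.1 + s) ⬝ᵥ x.2

lemma shiftedForm_polar [CommRing R] [CharP R 2] (s : ι → R) (x y : (ι → R) × (ι → R)) :
    shiftedForm s (x + y) + shiftedForm s x + shiftedForm s y = x.1 ⬝ᵥ y.2 + x.2 ⬝ᵥ y.1 := by
  simp only [shiftedForm, Prod.fst_add, Prod.snd_add, add_dotProduct, dotProduct_add]
  rw [dotProduct_comm x.2 y.1]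
  linear_combination (x.1 ⬝ᵥ x.2 + y.1 ⬝ᵥ y.2 + s ⬝ᵥ x.2 + s ⬝ᵥ y.2) * CharP.cast_eq_zero R 2

lemma shiftedForm_shear {S : Matrix ι ι (ZMod 2)} (hS : S.IsSymm) {s : ι → ZMod 2}
    (hs : S *ᵥ s = diag S) (x : (ι → ZMod 2) × (ι → ZMod 2)) :
    shiftedForm s (shear S x) = shiftedForm s x := by
  have h1 := dotProduct_mulVec_self_of_isSymm hS x.1
  have h2 : s ⬝ᵥ S *ᵥ x.1 = diag S ⬝ᵥ x.1 := by
    rw [dotProduct_mulVec, ← mulVec_transpose, hS.eq, hs]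
  simp only [shiftedForm, shear_apply, dotProduct_add, add_dotProduct, h1, h2]
  linear_combination (diag S ⬝ᵥ x.1) * (by decide : (2 : ZMod 2) = 0)

lemma card_dotProduct_eq_zero_of_ne_zero {a : ι → ZMod 2} (ha : a ≠ 0) :
    Nat.card {b : ι → ZMod 2 // a ⬝ᵥ b = 0} = 2 ^ (Fintype.card ι - 1) := by
  classical
  let f : (ι → ZMod 2) →+ ZMod 2 := AddMonoidHom.mk' (a ⬝ᵥ ·) (dotProduct_add a)
  obtain ⟨i, hi⟩ : ∃ i, a i ≠ 0 := Function.ne_iff.1 ha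
  have hai : a i = 1 := by generalize a i = z at hi; revert z; decide
  have hf : Function.Surjective f := fun z => ⟨Pi.single i z, by simp [f, hai]⟩
  have hindex : f.ker.index = 2 := by
    rw [AddSubgroup.index_ker, AddMonoidHom.range_eq_top.2 hf]
    simp
  have hcard := f.ker.card_mul_index
  have hn : 0 < Fintype.card ι := Fintype.card_pos_iff.2 ⟨i⟩
  have hV : Nat.card (ι → ZMod 2) = 2 ^ Fintype.card ι := by simp [Nat.card_eq_fintype_card]
  rw [hindex, hV, ← Nat.sub_add_cancel hn, pow_succ] at hcard
  exact Nat.eq_of_mul_eq_mul_right two_pos hcard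

lemma card_dotProduct_eq_zero [Nonempty ι] :
    Nat.card {x : (ι → ZMod 2) × (ι → ZMod 2) // x.1 ⬝ᵥ x.2 = 0} =
      2 ^ (Fintype.card ι - 1) * (2 ^ Fintype.card ι + 1) := by
  classical
  have hn : 0 < Fintype.card ι := Fintype.card_pos
  have hnonzero : ∀ a ∈ Finset.univ.erase 0,
      Nat.card {b : ι → ZMod 2 // a ⬝ᵥ b = 0} = 2 ^ (Fintype.card ι - 1) :=
    fun a ha => card_dotProduct_eq_zero_of_ne_zero (Finset.ne_of_mem_erase ha)
  rw [Nat.card_congr (Equiv.subtypeProdEquivSigmaSubtype fun a b => a ⬝ᵥ b = 0), Nat.card_sigma,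
    ← Finset.add_sum_erase _ _ (Finset.mem_univ 0), Finset.sum_congr rfl hnonzero,
    Finset.sum_const, Finset.card_erase_of_mem (Finset.mem_univ 0), Finset.card_univ,
    Fintype.card_fun, ZMod.card, smul_eq_mul]
  simp only [zero_dotProduct, Nat.card_eq_fintype_card, Fintype.card_subtype_true,
    Fintype.card_fun, ZMod.card]
  obtain ⟨k, hk⟩ := Nat.exists_eq_add_of_lt hn
  rw [hk, zero_add, Nat.add_sub_cancel, pow_succ]
  have : 1 ≤ 2 ^ k := Nat.one_le_two_pow
  zify [Nat.one_le_two_pow, show 1 ≤ 2 ^ k * 2 by omega]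
  ring

lemma card_shiftedForm_eq_zero [Nonempty ι] (s : ι → ZMod 2) :
    Nat.card {x // shiftedForm s x = 0} = 2 ^ (Fintype.card ι - 1) * (2 ^ Fintype.card ι + 1) :=
  (Nat.card_congr (Equiv.subtypeEquiv ((Equiv.addRight s).prodCongr (Equiv.refl _))
    fun _ => Iff.rfl)).trans card_dotProduct_eq_zero

section FixedForms

variable {Q : (ι → ZMod 2) × (ι → ZMod 2) → ZMod 2}

lemma apply_zero_snd_add (hQ : ∀ x y, Q (x + y) + Q x + Q y = x.1 ⬝ᵥ y.2 + x.2 ⬝ᵥ y.1)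
    (v w : ι → ZMod 2) : Q (0, v + w) = Q (0, v) + Q (0, w) := by
  have h := hQ (0, v) (0, w)
  simp only [Prod.mk_add_mk, add_zero, zero_dotProduct, dotProduct_zero] at h
  linear_combination h - (Q (0, v) + Q (0, w)) * (by decide : (2 : ZMod 2) = 0)

lemma apply_zero_snd_eq_one [DecidableEq ι]
    (hQ : ∀ x y, Q (x + y) + Q x + Q y = x.1 ⬝ᵥ y.2 + x.2 ⬝ᵥ y.1)
    (hfix : ∀ S : Matrix ι ι (ZMod 2), S.IsSymm → ∀ x, Q (shear S x) = Q x)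
    {v : ι → ZMod 2} {k : ι} (hk : v k = 1) : Q (0, v) = 1 := by
  have hshear : shear (vecMulVec v v) (Pi.single k 1, 0) = (Pi.single k 1, 0) + (0, v) := by
    ext <;> simp [vecMulVec_apply, hk]
  have h := hQ (Pi.single k 1, 0) (0, v)
  rw [← hshear, hfix _ (transpose_vecMulVec v v)] at h
  simp only [single_dotProduct, hk, one_mul, zero_dotProduct, add_zero] at h
  linear_combination h - Q (Pi.single k 1, 0) * (by decide : (2 : ZMod 2) = 0)

lemma not_forall_shear_fixed (hQ : ∀ x y, Q (x + y) + Q x + Q y = x.1 ⬝ᵥ y.2 + x.2 ⬝ᵥ y.1)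
    {i j : ι} (hij : i ≠ j) :
    ¬ ∀ S : Matrix ι ι (ZMod 2), S.IsSymm → ∀ x, Q (shear S x) = Q x := by
  classical
  intro hfix
  have h := apply_zero_snd_eq_one hQ hfix (v := Pi.single i 1 + Pi.single j 1) (k := i)
    (by simp [hij])
  rw [apply_zero_snd_add hQ, apply_zero_snd_eq_one hQ hfix (Pi.single_eq_same i 1),
    apply_zero_snd_eq_one hQ hfix (Pi.single_eq_same j 1)] at h
  exact absurd h (by decide)

end FixedForms

end SymplecticF2

open SymplecticF2

/-- **Existence of the group-theoretic counterexample subgroup of Sp_{2m}(𝔽₂), m ≥ 3.**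
Model `𝔽₂^{2m}` as `V = (Fin m → 𝔽₂) × (Fin m → 𝔽₂)` with the standard symplectic
form `⟨(a,b),(c,d)⟩ = ∑ᵢ aᵢdᵢ + bᵢcᵢ`.  `Sp_{2m}(𝔽₂)` is the group of linear
automorphisms preserving this form; a quadratic form with this polar form satisfies
`Q(x+y) + Q(x) + Q(y) = ⟨x,y⟩`, it has Arf invariant `0` iff `#{x : Q x = 0} =
2^(m-1)(2^m+1)`, and it is fixed by `g` (for the action `(g·Q)(x) = Q(g⁻¹x)`) iff
`Q ∘ g = Q`.  Claim: for every `m ≥ 3` there is a subgroup `G` of `Sp_{2m}(𝔽₂)`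
such that (a) no Arf-invariant-`0` quadratic form with the standard polar form is
fixed by every element of `G`, while (b) every single element of `G` fixes some
Arf-invariant-`0` quadratic form with the standard polar form. -/
theorem stmt14 (m : ℕ) (hm : 3 ≤ m) :
    let V := (Fin m → ZMod 2) × (Fin m → ZMod 2)
    let B : V → V → ZMod 2 := fun x y => ∑ i, (x.1 i * y.2 i + x.2 i * y.1 i)
    let IsQuad : (V → ZMod 2) → Prop := fun Q => ∀ x y, Q (x + y) + Q x + Q y = B x y
    let Arf0 : (V → ZMod 2) → Prop := fun Q =>
      Nat.card {x : V // Q x = 0} = 2 ^ (m - 1) * (2 ^ m + 1)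
    ∃ G : Subgroup (V ≃ₗ[ZMod 2] V),
      (∀ g ∈ G, ∀ x y : V, B (g x) (g y) = B x y) ∧
      (¬ ∃ Q : V → ZMod 2, IsQuad Q ∧ Arf0 Q ∧ ∀ g ∈ G, ∀ x, Q (g x) = Q x) ∧
      (∀ g ∈ G, ∃ Q : V → ZMod 2, IsQuad Q ∧ Arf0 Q ∧ ∀ x, Q (g x) = Q x) := by
  intro V B IsQuad Arf0
  have hB : ∀ x y : V, B x y = x.1 ⬝ᵥ y.2 + x.2 ⬝ᵥ y.1 := fun _ _ => Finset.sum_add_distrib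
  have : Nonempty (Fin m) := ⟨⟨0, by omega⟩⟩
  refine ⟨symmetricShears (Fin m) (ZMod 2), ?_, ?_, ?_⟩
  · rintro _ ⟨S, hS, rfl⟩ x y
    rw [hB, hB]
    exact shear_preserves_form hS x y
  · rintro ⟨Q, hQ, -, hfix⟩
    exact not_forall_shear_fixed (fun x y => (hQ x y).trans (hB x y))
      (i := ⟨0, by omega⟩) (j := ⟨1, by omega⟩) (by simp) fun S hS => hfix _ ⟨S, hS, rfl⟩
  · rintro _ ⟨S, hS, rfl⟩
    obtain ⟨s, hs⟩ := exists_mulVec_eq_diag hS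
    refine ⟨shiftedForm s, fun x y => (shiftedForm_polar s x y).trans (hB x y).symm, ?_,
      shiftedForm_shear hS hs⟩
    show Nat.card _ = _
    rw [card_shiftedForm_eq_zero, Fintype.card_fin]
end
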